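/- arXiv:2303.18061 — 2 statements merged into one kernel-verified Lean document; each statement's English description precedes it below -/
import Mathlib

section
/- (Arcsine law for 1-bit quantized jointly Gaussian variables.) Let U and V be independent real standard normal random variables, let r ∈ ℝ with |r| ≤ 1, and set X = U and Y = rU + √(1 − r²) V. Then E[sgn(X) · sgn(Y)] = (2/π) arcsin(r). -/
/-!
The pair `(U, V)` has the rotation-invariant density `(2π)⁻¹ exp (-‖p‖² / 2)` on `ℝ²`, and the
integrand `F p = sgn p₁ · sgn (r p₁ + √(1 - r²) p₂)` depends only on the direction of `p`. In
polar coordinates the radial factor integrates to `1`, so the expectation is the average of `F`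
over the unit circle. With `r = sin α` the integrand on the circle is
`sgn (cos θ) · sgn (sin (θ + α))`; it is `π`-periodic and equals `sgn (sin (θ + α))` for
`|θ| < π / 2`, where its integral is `2α`.
-/

open MeasureTheory ProbabilityTheory Real Set

namespace Real

theorem sign_mul (a b : ℝ) : sign (a * b) = sign a * sign b := by
  rcases lt_trichotomy a 0 with ha | rfl | ha <;> rcases lt_trichotomy b 0 with hb | rfl | hb <;>
    simp [sign_of_neg, sign_of_pos, mul_pos_of_neg_of_neg, mul_neg_of_pos_of_neg,
      mul_neg_of_neg_of_pos, *]

theorem sign_mul_of_pos {a : ℝ} (ha : 0 < a) (b : ℝ) : sign (a * b) = sign b := by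
  rw [sign_mul, sign_of_pos ha, one_mul]

theorem abs_sign_le_one (a : ℝ) : |sign a| ≤ 1 := by
  rcases sign_apply_eq a with h | h | h <;> simp [h]

@[fun_prop]
theorem measurable_sign : Measurable sign :=
  Measurable.ite measurableSet_Iio measurable_const
    (Measurable.ite measurableSet_Ioi measurable_const measurable_const)

end Real

theorem intervalIntegrable_sign_comp {f : ℝ → ℝ} (hf : Measurable f) (a b : ℝ) :
    IntervalIntegrable (fun x ↦ sign (f x)) volume a b := by
  have h (s : Set ℝ) (hs : volume s < ⊤) : IntegrableOn (fun x ↦ sign (f x)) s :=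
    .of_bound hs (measurable_sign.comp hf).aestronglyMeasurable 1
      (.of_forall fun x ↦ abs_sign_le_one (f x))
  exact ⟨h _ measure_Ioc_lt_top, h _ measure_Ioc_lt_top⟩

theorem intervalIntegral.integral_congr_Ioo {f g : ℝ → ℝ} {a b : ℝ} (hab : a ≤ b)
    (h : EqOn f g (Ioo a b)) : ∫ x in a..b, f x = ∫ x in a..b, g x := by
  simp only [integral_of_le hab, integral_Ioc_eq_integral_Ioo,
    setIntegral_congr_fun measurableSet_Ioo h]

theorem integral_sign_sin {a b : ℝ} (ha : -π ≤ a) (ha₀ : a ≤ 0) (hb₀ : 0 ≤ b) (hb : b ≤ π) :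
    ∫ x in a..b, sign (sin x) = a + b := by
  have hneg : ∫ x in a..0, sign (sin x) = ∫ _ in a..0, (-1 : ℝ) :=
    intervalIntegral.integral_congr_Ioo ha₀ fun x hx ↦
      sign_of_neg (sin_neg_of_neg_of_neg_pi_lt hx.2 (by linarith [hx.1]))
  have hpos : ∫ x in (0 : ℝ)..b, sign (sin x) = ∫ _ in (0 : ℝ)..b, (1 : ℝ) :=
    intervalIntegral.integral_congr_Ioo hb₀ fun x hx ↦
      sign_of_pos (sin_pos_of_pos_of_lt_pi hx.1 (by linarith [hx.2]))
  rw [← intervalIntegral.integral_add_adjacent_intervals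
    (intervalIntegrable_sign_comp measurable_sin a 0)
    (intervalIntegrable_sign_comp measurable_sin 0 b), hneg, hpos]
  simp

theorem integral_sign_cos_mul_sign_sin_add {α : ℝ} (hα₀ : -(π / 2) ≤ α) (hα₁ : α ≤ π / 2) :
    ∫ θ in (-π)..π, sign (cos θ) * sign (sin (θ + α)) = 4 * α := by
  set f := fun θ ↦ sign (cos θ) * sign (sin (θ + α))
  have hf : Function.Periodic f π := fun θ ↦ by
    simp only [f, cos_add_pi, add_right_comm θ π α, sin_add_pi, sign_neg, neg_mul_neg]
  have hfi (a b : ℝ) : IntervalIntegrable f volume a b := by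
    simpa only [f, ← sign_mul] using intervalIntegrable_sign_comp (by fun_prop) a b
  have hhalf : ∫ θ in (-(π / 2))..(π / 2), f θ = ∫ θ in (-(π / 2))..(π / 2), sign (sin (θ + α)) :=
    intervalIntegral.integral_congr_Ioo (by linarith [pi_pos]) fun θ hθ ↦ by
      simp [f, sign_of_pos (cos_pos_of_mem_Ioo hθ)]
  have hperiod : ∫ θ in (-π)..π, f θ = 2 * ∫ θ in (-(π / 2))..(π / 2), f θ := by
    have htwo := hf.intervalIntegral_add_zsmul_eq 2 (-π) hfi
    have hshift := hf.intervalIntegral_add_eq (-π) (-(π / 2))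
    rwa [hshift, zsmul_eq_mul, zsmul_eq_mul, Int.cast_ofNat, show -π + 2 * π = π by ring,
      show -(π / 2) + π = π / 2 by ring] at htwo
  rw [hperiod, hhalf, intervalIntegral.integral_comp_add_right (fun x ↦ sign (sin x)),
    integral_sign_sin (by linarith) (by linarith) (by linarith) (by linarith)]
  ring

theorem integral_Ioi_mul_exp_neg_sq_div_two : ∫ x in Ioi (0 : ℝ), x * exp (-x ^ 2 / 2) = 1 := by
  have h := integral_rpow_mul_exp_neg_mul_rpow (p := 2) (q := 1) (b := 1 / 2)
    (by norm_num) (by norm_num) (by norm_num)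
  norm_num [Gamma_one] at h
  convert h using 5
  ring

theorem gaussianPDFReal_zero_one_mul (x y : ℝ) :
    gaussianPDFReal 0 1 x * gaussianPDFReal 0 1 y = (2 * π)⁻¹ * exp (-(x ^ 2 + y ^ 2) / 2) := by
  simp only [gaussianPDFReal_def, NNReal.coe_one, sub_zero, mul_one]
  rw [mul_mul_mul_comm, ← mul_inv, mul_self_sqrt (by positivity), ← exp_add]
  ring_nf

theorem integral_gaussianReal_prod_gaussianReal (F : ℝ × ℝ → ℝ) :
    ∫ p, F p ∂(gaussianReal 0 1).prod (gaussianReal 0 1) =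
      ∫ p, ((2 * π)⁻¹ * exp (-(p.1 ^ 2 + p.2 ^ 2) / 2)) * F p := by
  rw [gaussianReal_of_var_ne_zero 0 one_ne_zero,
    prod_withDensity (measurable_gaussianPDF 0 1) (measurable_gaussianPDF 0 1),
    integral_withDensity_eq_integral_toReal_smul (by fun_prop)
      (.of_forall fun _ ↦ ENNReal.mul_lt_top (by simp [gaussianPDF]) (by simp [gaussianPDF]))]
  congr with p
  rw [gaussianPDF, gaussianPDF, ← ENNReal.ofReal_mul (gaussianPDFReal_nonneg _ _ _),
    ENNReal.toReal_ofReal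
      (mul_nonneg (gaussianPDFReal_nonneg _ _ _) (gaussianPDFReal_nonneg _ _ _)),
    gaussianPDFReal_zero_one_mul, smul_eq_mul]

theorem integral_gaussianReal_prod_gaussianReal_of_scale_invariant (F : ℝ × ℝ → ℝ)
    (hF : ∀ c : ℝ, 0 < c → ∀ p, F (c • p) = F p) :
    ∫ p, F p ∂(gaussianReal 0 1).prod (gaussianReal 0 1) =
      (2 * π)⁻¹ * ∫ θ in (-π)..π, F (cos θ, sin θ) := by
  have hpolar : ∀ p ∈ Ioi (0 : ℝ) ×ˢ Ioo (-π) π,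
      p.1 • ((2 * π)⁻¹ * exp (-((polarCoord.symm p).1 ^ 2 + (polarCoord.symm p).2 ^ 2) / 2) *
        F (polarCoord.symm p)) = p.1 * exp (-p.1 ^ 2 / 2) * ((2 * π)⁻¹ * F (cos p.2, sin p.2)) := by
    rintro ⟨ρ, θ⟩ ⟨hρ, -⟩
    have hsymm : polarCoord.symm (ρ, θ) = ρ • (cos θ, sin θ) := by simp [polarCoord_symm_apply]
    have hnorm : (ρ * cos θ) ^ 2 + (ρ * sin θ) ^ 2 = ρ ^ 2 := by
      linear_combination ρ ^ 2 * cos_sq_add_sin_sq θ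
    rw [hsymm, hF ρ hρ]
    simp only [Prod.smul_fst, Prod.smul_snd, smul_eq_mul, hnorm]
    ring
  rw [integral_gaussianReal_prod_gaussianReal, ← integral_comp_polarCoord_symm, polarCoord_target,
    setIntegral_congr_fun (measurableSet_Ioi.prod measurableSet_Ioo) hpolar, Measure.volume_eq_prod,
    setIntegral_prod_mul (fun ρ ↦ ρ * exp (-ρ ^ 2 / 2)) (fun θ ↦ (2 * π)⁻¹ * F (cos θ, sin θ)),
    integral_Ioi_mul_exp_neg_sq_div_two, one_mul, integral_const_mul,
    intervalIntegral.integral_of_le (by linarith [pi_pos]), integral_Ioc_eq_integral_Ioo]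

theorem arcsine_law_sign_sign_general
    {Ω : Type*} [MeasurableSpace Ω] (μ : Measure Ω)
    (U V : Ω → ℝ) (hU : Measurable U) (hV : Measurable V)
    (hUV : IndepFun U V μ)
    (hUgauss : Measure.map U μ = gaussianReal 0 1)
    (hVgauss : Measure.map V μ = gaussianReal 0 1)
    (r : ℝ) (hr : |r| ≤ 1) :
    ∫ ω, Real.sign (U ω) *
        Real.sign (r * U ω + Real.sqrt (1 - r ^ 2) * V ω) ∂μ =
      (2 / Real.pi) * Real.arcsin r := by
  obtain ⟨hr₀, hr₁⟩ := abs_le.mp hr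
  set F : ℝ × ℝ → ℝ := fun p ↦ sign p.1 * sign (r * p.1 + √(1 - r ^ 2) * p.2)
  have hF : Measurable F := by fun_prop
  have hF_smul (c : ℝ) (hc : 0 < c) (p : ℝ × ℝ) : F (c • p) = F p := by
    simp only [F, Prod.smul_fst, Prod.smul_snd, smul_eq_mul, sign_mul_of_pos hc,
      show r * (c * p.1) + √(1 - r ^ 2) * (c * p.2) = c * (r * p.1 + √(1 - r ^ 2) * p.2) by ring]
  have hF_circle (θ : ℝ) : F (cos θ, sin θ) = sign (cos θ) * sign (sin (θ + arcsin r)) := by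
    simp only [F, sin_add, sin_arcsin hr₀ hr₁, cos_arcsin]
    ring_nf
  have hlaw : μ.map (fun ω ↦ (U ω, V ω)) = (gaussianReal 0 1).prod (gaussianReal 0 1) := by
    have hσU : SigmaFinite (μ.map U) := by rw [hUgauss]; infer_instance
    have hσV : SigmaFinite (μ.map V) := by rw [hVgauss]; infer_instance
    rw [(indepFun_iff_map_prod_eq_prod_map_map' hU.aemeasurable hV.aemeasurable hσU hσV).mp hUV,
      hUgauss, hVgauss]
  calc ∫ ω, F (U ω, V ω) ∂μ = ∫ p, F p ∂(gaussianReal 0 1).prod (gaussianReal 0 1) := by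
        rw [← hlaw, integral_map (hU.prodMk hV).aemeasurable hF.aestronglyMeasurable]
    _ = (2 * π)⁻¹ * ∫ θ in (-π)..π, F (cos θ, sin θ) :=
        integral_gaussianReal_prod_gaussianReal_of_scale_invariant F hF_smul
    _ = (2 * π)⁻¹ * (4 * arcsin r) := by
        simp only [hF_circle, integral_sign_cos_mul_sign_sin_add (neg_pi_div_two_le_arcsin r)
          (arcsin_le_pi_div_two r)]
    _ = 2 / π * arcsin r := by
        field_simp
        ring

/-- **Arcsine law for 1-bit quantized jointly Gaussian variables.**
Let `U` and `V` be independent real standard normal random variables, let `r ∈ ℝ` with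
`|r| ≤ 1`, and set `X = U` and `Y = r • U + √(1 − r²) • V`.  Then
`E[sgn X · sgn Y] = (2/π) arcsin r`. -/
theorem arcsine_law_sign_sign
    {Ω : Type*} [MeasurableSpace Ω] (μ : Measure Ω) [IsProbabilityMeasure μ]
    (U V : Ω → ℝ) (hU : Measurable U) (hV : Measurable V)
    (hUV : IndepFun U V μ)
    (hUgauss : Measure.map U μ = gaussianReal 0 1)
    (hVgauss : Measure.map V μ = gaussianReal 0 1)
    (r : ℝ) (hr : |r| ≤ 1) :
    ∫ ω, Real.sign (U ω) *
        Real.sign (r * U ω + Real.sqrt (1 - r ^ 2) * V ω) ∂μ =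
      (2 / Real.pi) * Real.arcsin r :=
  arcsine_law_sign_sign_general μ U V hU hV hUV hUgauss hVgauss r hr
end

section
/- (Complex Bussgang identity.) Let G1, G2, G3, G4 be i.i.d. real standard normal random variables, let r, s ∈ ℝ with r² + s² ≤ 1, and set U1 = G1, U2 = G2, V1 = r G1 + s G2 + √(1 − r² − s²) G3, V2 = −s G1 + r G2 + √(1 − r² − s²) G4. Then E[ (sgn(U1) + j·sgn(U2)) · (V1 − j·V2) ] = 2√(2/π) · (r + j·s). -/
/-!
Both factors of the integrand are linear: the first in the signs `sgn Gᵢ` with coefficients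
`v = (1, j, 0, 0)`, the second in the `Gₖ` with coefficients
`w = (r + js, s - jr, √(1 - r² - s²), -j√(1 - r² - s²))`. For `i ≠ k` independence and
`E[Gₖ] = 0` give `E[sgn(Gᵢ) Gₖ] = 0`, while `E[sgn(Gᵢ) Gᵢ] = E|Gᵢ| = √(2/π)`. Hence the
expectation is `√(2/π) ∑ᵢ vᵢ wᵢ = √(2/π) (r + js + j(s - jr)) = 2√(2/π) (r + js)`.
-/

open MeasureTheory ProbabilityTheory Complex Set

namespace Real

lemma measurable_sign_s7 : Measurable Real.sign :=
  Measurable.ite (measurableSet_lt measurable_id measurable_const) measurable_const <|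
    Measurable.ite (measurableSet_lt measurable_const measurable_id) measurable_const
      measurable_const

lemma abs_sign_le_one_s7 (x : ℝ) : |Real.sign x| ≤ 1 := by
  rcases Real.sign_apply_eq x with h | h | h <;> simp [h]

lemma sign_mul_self (x : ℝ) : Real.sign x * x = |x| := by
  rcases lt_trichotomy x 0 with h | rfl | h
  · rw [sign_of_neg h, abs_of_neg h, neg_one_mul]
  · simp
  · rw [sign_of_pos h, abs_of_pos h, one_mul]

end Real

lemma integral_Ioi_mul_exp_neg_mul_sq {b : ℝ} (hb : 0 < b) :
    ∫ x in Ioi (0 : ℝ), x * Real.exp (-b * x ^ 2) = (2 * b)⁻¹ := by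
  have h := integral_mul_cexp_neg_mul_sq (b := (b : ℂ)) (by simpa using hb)
  norm_cast at h

namespace ProbabilityTheory

lemma integral_abs_gaussianReal : ∫ x, |x| ∂gaussianReal 0 1 = √(2 / Real.pi) := by
  rw [integral_gaussianReal_eq_integral_smul one_ne_zero]
  simp only [gaussianPDFReal, smul_eq_mul, NNReal.coe_one, mul_one, sub_zero]
  have hcomp_abs (x : ℝ) : (√(2 * Real.pi))⁻¹ * Real.exp (-x ^ 2 / 2) * |x|
      = (√(2 * Real.pi))⁻¹ * (|x| * Real.exp (-(1 / 2) * |x| ^ 2)) := by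
    rw [sq_abs]
    ring_nf
  simp_rw [hcomp_abs]
  rw [integral_comp_abs (f := fun x => (√(2 * Real.pi))⁻¹ * (x * Real.exp (-(1 / 2) * x ^ 2))),
    integral_const_mul, integral_Ioi_mul_exp_neg_mul_sq one_half_pos,
    Real.sqrt_div zero_le_two, Real.sqrt_mul zero_le_two]
  field_simp
  exact (Real.sq_sqrt zero_le_two).symm

variable {Ω 𝓧 ι : Type*} {mΩ : MeasurableSpace Ω} {m𝓧 : MeasurableSpace 𝓧} {P : Measure Ω}

lemma hasLaw_of_map_eq {X : Ω → 𝓧} {ν : Measure 𝓧} [NeZero ν] (h : P.map X = ν) :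
    HasLaw X ν P :=
  ⟨.of_map_ne_zero (h ▸ NeZero.ne ν), h⟩

lemma HasLaw.integral_gaussianReal {X : Ω → ℝ} {m : ℝ} {v : NNReal}
    (hX : HasLaw X (gaussianReal m v) P) : ∫ ω, X ω ∂P = m := by
  rw [hX.integral_eq, integral_id_gaussianReal]

lemma HasLaw.integral_sign_mul_self_gaussianReal {X : Ω → ℝ}
    (hX : HasLaw X (gaussianReal 0 1) P) :
    ∫ ω, Real.sign (X ω) * X ω ∂P = √(2 / Real.pi) := by
  simp_rw [Real.sign_mul_self]
  rw [← integral_abs_gaussianReal]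
  exact hX.integral_comp continuous_abs.aestronglyMeasurable

lemma IndepFun.integral_sign_mul_eq_zero {X Y : Ω → ℝ} (hXY : X ⟂ᵢ[P] Y)
    (hX : AEMeasurable X P) (hY : AEStronglyMeasurable Y P) (hY0 : ∫ ω, Y ω ∂P = 0) :
    ∫ ω, Real.sign (X ω) * Y ω ∂P = 0 := by
  have hind : (fun ω => Real.sign (X ω)) ⟂ᵢ[P] Y := hXY.comp Real.measurable_sign_s7 measurable_id
  rw [hind.integral_fun_mul_eq_mul_integral
    (Real.measurable_sign_s7.comp_aemeasurable hX).aestronglyMeasurable hY, hY0, mul_zero]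

lemma _root_.MeasureTheory.Integrable.sign_mul {X Y : Ω → ℝ} (hY : Integrable Y P)
    (hX : AEMeasurable X P) : Integrable (fun ω => Real.sign (X ω) * Y ω) P :=
  hY.bdd_mul (Real.measurable_sign_s7.comp_aemeasurable hX).aestronglyMeasurable
    (ae_of_all _ fun ω => Real.abs_sign_le_one_s7 (X ω))

lemma iIndepFun.integral_sign_mul_gaussianReal [DecidableEq ι] {G : ι → Ω → ℝ}
    (hindep : iIndepFun G P) (hG : ∀ i, HasLaw (G i) (gaussianReal 0 1) P) (i k : ι) :
    ∫ ω, Real.sign (G i ω) * G k ω ∂P = if i = k then √(2 / Real.pi) else 0 := by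
  split_ifs with hik
  · subst hik
    exact (hG i).integral_sign_mul_self_gaussianReal
  · exact (hindep.indepFun hik).integral_sign_mul_eq_zero (hG i).aemeasurable
      (hG k).aemeasurable.aestronglyMeasurable (hG k).integral_gaussianReal

lemma iIndepFun.integral_sum_sign_mul_sum_gaussianReal [Fintype ι] {G : ι → Ω → ℝ}
    (hindep : iIndepFun G P) (hG : ∀ i, HasLaw (G i) (gaussianReal 0 1) P) (v w : ι → ℂ) :
    ∫ ω, (∑ i, v i * Real.sign (G i ω)) * (∑ k, w k * G k ω) ∂P
      = √(2 / Real.pi) * ∑ i, v i * w i := by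
  classical
  have hint (i k : ι) : Integrable (fun ω => v i * w k * (Real.sign (G i ω) * G k ω : ℝ)) P :=
    (((hG k).hasGaussianLaw.integrable.sign_mul (hG i).aemeasurable).ofReal).const_mul _
  have hexpand (ω : Ω) : (∑ i, v i * Real.sign (G i ω)) * (∑ k, w k * G k ω)
      = ∑ i, ∑ k, v i * w k * (Real.sign (G i ω) * G k ω : ℝ) := by
    rw [Finset.sum_mul_sum]
    refine Finset.sum_congr rfl fun i _ => Finset.sum_congr rfl fun k _ => ?_
    push_cast
    ring
  calc ∫ ω, (∑ i, v i * Real.sign (G i ω)) * (∑ k, w k * G k ω) ∂P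
      = ∑ i, ∑ k, v i * w k * ((if i = k then √(2 / Real.pi) else 0 : ℝ) : ℂ) := by
        simp_rw [hexpand]
        rw [integral_finsetSum _ fun i _ => integrable_finsetSum _ fun k _ => hint i k]
        refine Finset.sum_congr rfl fun i _ => ?_
        rw [integral_finsetSum _ fun k _ => hint i k]
        refine Finset.sum_congr rfl fun k _ => ?_
        rw [integral_const_mul, integral_complex_ofReal, hindep.integral_sign_mul_gaussianReal hG]
    _ = √(2 / Real.pi) * ∑ i, v i * w i := by
        simp_rw [apply_ite ((↑) : ℝ → ℂ), ofReal_zero, mul_ite, mul_zero, Finset.sum_ite_eq,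
          Finset.mem_univ, if_true, Finset.mul_sum, mul_comm]

end ProbabilityTheory

theorem complex_bussgang_general
    {Ω : Type*} [MeasurableSpace Ω] (μ : Measure Ω)
    (G : Fin 4 → Ω → ℝ)
    (hindep : iIndepFun G μ)
    (hgauss : ∀ i, Measure.map (G i) μ = gaussianReal 0 1)
    (r s : ℝ) :
    ∫ ω,
        (((Real.sign (G 0 ω) : ℝ) : ℂ) + Complex.I * ((Real.sign (G 1 ω) : ℝ) : ℂ)) *
          (((r * G 0 ω + s * G 1 ω + Real.sqrt (1 - r ^ 2 - s ^ 2) * G 2 ω : ℝ) : ℂ) -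
            Complex.I * ((-s * G 0 ω + r * G 1 ω +
                Real.sqrt (1 - r ^ 2 - s ^ 2) * G 3 ω : ℝ) : ℂ)) ∂μ =
      ((2 * Real.sqrt (2 / Real.pi) : ℝ) : ℂ) * (((r : ℝ) : ℂ) + Complex.I * ((s : ℝ) : ℂ)) := by
  set a := √(1 - r ^ 2 - s ^ 2)
  have hfactor (ω : Ω) :
      (((Real.sign (G 0 ω) : ℝ) : ℂ) + I * ((Real.sign (G 1 ω) : ℝ) : ℂ)) *
          (((r * G 0 ω + s * G 1 ω + a * G 2 ω : ℝ) : ℂ) -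
            I * ((-s * G 0 ω + r * G 1 ω + a * G 3 ω : ℝ) : ℂ))
        = (∑ i, ![1, I, 0, 0] i * Real.sign (G i ω)) *
            ∑ k, ![r + I * s, s - I * r, a, -I * a] k * G k ω := by
    simp only [Fin.sum_univ_four, Matrix.cons_val]
    push_cast
    ring
  simp_rw [hfactor,
    hindep.integral_sum_sign_mul_sum_gaussianReal fun i => hasLaw_of_map_eq (hgauss i)]
  simp only [Fin.sum_univ_four, Matrix.cons_val]
  push_cast
  linear_combination (-(√(2 / Real.pi) : ℂ) * r) * I_sq

/-- **Complex Bussgang identity.**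
Let `G1, G2, G3, G4` be i.i.d. real standard normal random variables, let `r s : ℝ` with
`r² + s² ≤ 1`, and set `U1 = G1`, `U2 = G2`,
`V1 = r G1 + s G2 + √(1 − r² − s²) G3`, `V2 = −s G1 + r G2 + √(1 − r² − s²) G4`.  Then
`E[(sgn U1 + j sgn U2)(V1 − j V2)] = 2 √(2/π) (r + j s)`. -/
theorem complex_bussgang
    {Ω : Type*} [MeasurableSpace Ω] (μ : Measure Ω) [IsProbabilityMeasure μ]
    (G : Fin 4 → Ω → ℝ) (hmeas : ∀ i, Measurable (G i))
    (hindep : iIndepFun G μ)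
    (hgauss : ∀ i, Measure.map (G i) μ = gaussianReal 0 1)
    (r s : ℝ) (hrs : r ^ 2 + s ^ 2 ≤ 1) :
    ∫ ω,
        (((Real.sign (G 0 ω) : ℝ) : ℂ) + Complex.I * ((Real.sign (G 1 ω) : ℝ) : ℂ)) *
          (((r * G 0 ω + s * G 1 ω + Real.sqrt (1 - r ^ 2 - s ^ 2) * G 2 ω : ℝ) : ℂ) -
            Complex.I * ((-s * G 0 ω + r * G 1 ω +
                Real.sqrt (1 - r ^ 2 - s ^ 2) * G 3 ω : ℝ) : ℂ)) ∂μ =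
      ((2 * Real.sqrt (2 / Real.pi) : ℝ) : ℂ) * (((r : ℝ) : ℂ) + Complex.I * ((s : ℝ) : ℂ)) :=
  complex_bussgang_general μ G hindep hgauss r s
end
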